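/- arXiv:1911.08380 — 4 statements merged into one kernel-verified Lean document; each statement's English description precedes it below -/
import Mathlib

section
/- Let f : ℝ^n → ℝ satisfy the quadratic upper bound f(y) ≤ f(x) + ⟨∇f(x), y−x⟩ + (L/2)‖y−x‖² for all x, y, with L > 0. Let g ∈ ℝ^n and x' = x − (1/(2L))·g. Then f(x') − f(x) ≤ −(1/(4L))‖g‖² + (1/(2L))‖g − ∇f(x)‖². -/
/-!
Taking `y = x - g / (2L)` in the quadratic upper bound gives
`f y - f x ≤ (‖g‖² / 4 - ⟪∇f x, g⟫) / (2L)`, and completing the square,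
`⟪∇f x, g⟫ + ‖g - ∇f x‖² - 3‖g‖² / 4 = ‖∇f x - g / 2‖² ≥ 0`, turns this into the claimed bound.
-/

open RealInnerProductSpace

section

variable {E : Type*} [NormedAddCommGroup E] [InnerProductSpace ℝ E]

theorem three_quarters_mul_norm_sq_le_inner_add_norm_sub_sq (d g : E) :
    3 / 4 * ‖g‖ ^ 2 ≤ ⟪d, g⟫ + ‖g - d‖ ^ 2 := by
  have hsquare : ⟪d, g⟫ + ‖g - d‖ ^ 2 - 3 / 4 * ‖g‖ ^ 2 = ‖d - (1 / 2 : ℝ) • g‖ ^ 2 := by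
    rw [norm_sub_sq_real, norm_sub_sq_real, inner_smul_right, norm_smul, real_inner_comm g d,
      Real.norm_of_nonneg (by norm_num : (0 : ℝ) ≤ 1 / 2)]
    ring
  nlinarith [sq_nonneg ‖d - (1 / 2 : ℝ) • g‖]

theorem le_of_quadratic_upper_bound_sub_smul {f : E → ℝ} {x d : E} {L : ℝ}
    (hf : ∀ y, f y ≤ f x + ⟪d, y - x⟫ + L / 2 * ‖y - x‖ ^ 2) (t : ℝ) (g : E) :
    f (x - t • g) ≤ f x - t * ⟪d, g⟫ + L / 2 * t ^ 2 * ‖g‖ ^ 2 := by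
  have hstep := hf (x - t • g)
  rwa [sub_sub_cancel_left, inner_neg_right, inner_smul_right, norm_neg, norm_smul, mul_pow,
    Real.norm_eq_abs, sq_abs, ← sub_eq_add_neg, ← mul_assoc] at hstep

end

theorem sgd_one_step_decrease (n : ℕ) (f : EuclideanSpace ℝ (Fin n) → ℝ)
    (grad : EuclideanSpace ℝ (Fin n) → EuclideanSpace ℝ (Fin n))
    (L : ℝ) (hL : 0 < L)
    (hsmooth : ∀ x y, f y ≤ f x + ⟪grad x, y - x⟫ + (L / 2) * ‖y - x‖ ^ 2)
    (x g : EuclideanSpace ℝ (Fin n)) :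
    f (x - (1 / (2 * L)) • g) - f x ≤
      -(1 / (4 * L)) * ‖g‖ ^ 2 + (1 / (2 * L)) * ‖g - grad x‖ ^ 2 := by
  set t := 1 / (2 * L) with ht
  have hstep := le_of_quadratic_upper_bound_sub_smul (hsmooth x) t g
  have hsquare := three_quarters_mul_norm_sq_le_inner_add_norm_sub_sq (grad x) g
  have ht_nonneg : 0 ≤ t := by positivity
  have hLt : L / 2 * t ^ 2 = t / 4 := by rw [ht]; field_simp; ring
  have h4L : 1 / (4 * L) = t / 2 := by rw [ht]; field_simp; ring
  rw [hLt] at hstep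
  rw [h4L]
  linarith [mul_le_mul_of_nonneg_left hsquare ht_nonneg]
end

section
/- Let f : ℝ^n → ℝ satisfy f(y) ≤ f(x) + ⟨∇f(x), y−x⟩ + (L/2)‖y−x‖² for all x, y, with L > 0. Let g ∈ ℝ^n and x' = x − (1/(2L))g. Then f(x') − f(x) ≤ −(1/(8L))‖∇f(x)‖² + (3/(4L))‖g − ∇f(x)‖². -/
open RealInnerProductSpace

section InexactGradientStep

variable {E : Type*} [NormedAddCommGroup E] [InnerProductSpace ℝ E]

theorem apply_sub_smul_le_of_upper_quadratic {f : E → ℝ} {grad : E → E} {L : ℝ}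
    (hsmooth : ∀ x y, f y ≤ f x + ⟪grad x, y - x⟫ + (L / 2) * ‖y - x‖ ^ 2)
    (x g : E) (η : ℝ) :
    f (x - η • g) ≤ f x - η * ⟪grad x, g⟫ + L / 2 * η ^ 2 * ‖g‖ ^ 2 := by
  have h := hsmooth x (x - η • g)
  rwa [sub_sub_cancel_left, inner_neg_right, real_inner_smul_right, norm_neg, norm_smul,
    Real.norm_eq_abs, mul_pow, sq_abs, ← sub_eq_add_neg, ← mul_assoc] at h

/-- By polarization, `2⟪a, g⟫ = ‖a‖² + ‖g‖² - ‖g - a‖²`. -/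
theorem neg_inner_add_norm_sq_div_four_le (a g : E) :
    -⟪a, g⟫ + ‖g‖ ^ 2 / 4 ≤ (‖g - a‖ ^ 2 - ‖a‖ ^ 2) / 2 := by
  have hpolar := norm_sub_sq_real g a
  rw [real_inner_comm] at hpolar
  nlinarith [sq_nonneg ‖g‖]

end InexactGradientStep

theorem nonconvex_sgd_one_step (n : ℕ) (f : EuclideanSpace ℝ (Fin n) → ℝ)
    (grad : EuclideanSpace ℝ (Fin n) → EuclideanSpace ℝ (Fin n))
    (L : ℝ) (hL : 0 < L)
    (hsmooth : ∀ x y, f y ≤ f x + ⟪grad x, y - x⟫ + (L / 2) * ‖y - x‖ ^ 2)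
    (x g : EuclideanSpace ℝ (Fin n)) :
    f (x - (1 / (2 * L)) • g) - f x ≤
      -(1 / (8 * L)) * ‖grad x‖ ^ 2 + (3 / (4 * L)) * ‖g - grad x‖ ^ 2 := by
  set η := 1 / (2 * L) with hη
  have hη_pos : 0 < η := by positivity
  have hquad : L / 2 * η ^ 2 = η / 4 := by rw [hη]; field_simp; ring
  have h8 : 1 / (8 * L) = η / 4 := by rw [hη]; field_simp; ring
  have h4 : 3 / (4 * L) = 3 * η / 2 := by rw [hη]; field_simp; ring
  calc f (x - η • g) - f x ≤ η * (-⟪grad x, g⟫ + ‖g‖ ^ 2 / 4) := by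
        have hstep := apply_sub_smul_le_of_upper_quadratic hsmooth x g η
        rw [hquad] at hstep
        linarith
    _ ≤ η * ((‖g - grad x‖ ^ 2 - ‖grad x‖ ^ 2) / 2) := by
        gcongr; exact neg_inner_add_norm_sq_div_four_le (grad x) g
    _ ≤ -(1 / (8 * L)) * ‖grad x‖ ^ 2 + (3 / (4 * L)) * ‖g - grad x‖ ^ 2 := by
        rw [h8, h4]
        nlinarith [mul_nonneg hη_pos.le (sq_nonneg ‖grad x‖),
          mul_nonneg hη_pos.le (sq_nonneg ‖g - grad x‖)]
end

section
/- Let A_0 = 0 and suppose for each k ≥ 1, A_k = A_{k−1} + α_k where α_k = (1 + √(1 + 4 A_{k−1} L_k))/(2 L_k) and each L_k satisfies 0 < L_k ≤ L̄. Then A_N ≥ N²/(4 L̄) for all N ≥ 1. -/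
/-!
The increment `α = (1 + √(1 + 4 A L)) / (2 L)` is at least `1 / (2 L̄) + √(A / L̄)` when
`L ≤ L̄`. Hence if `A_k ≥ k² / (4 L̄)` then `α_{k+1} ≥ (k + 1) / (2 L̄)`, and
`k² + 2 (k + 1) ≥ (k + 1)²` closes the induction.
-/

theorem one_div_two_mul_add_sqrt_div_le {A L M : ℝ} (hA : 0 ≤ A) (hL : 0 < L) (hLM : L ≤ M) :
    1 / (2 * M) + √(A / M) ≤ (1 + √(1 + 4 * A * L)) / (2 * L) := by
  have hinv : 1 / (2 * M) ≤ 1 / (2 * L) := by gcongr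
  have hsqrt : √(A / M) ≤ √(1 + 4 * A * L) / (2 * L) := calc
    √(A / M) ≤ √(A / L) := Real.sqrt_le_sqrt (div_le_div_of_nonneg_left hA hL hLM)
    _ ≤ √(1 + 4 * A * L) / (2 * L) := by
      rw [Real.sqrt_le_left, div_pow, Real.sq_sqrt (by positivity),
        div_le_div_iff₀ hL (by positivity)]
      · nlinarith
      · positivity
  calc 1 / (2 * M) + √(A / M) ≤ 1 / (2 * L) + √(1 + 4 * A * L) / (2 * L) :=
        add_le_add hinv hsqrt
    _ = (1 + √(1 + 4 * A * L)) / (2 * L) := by rw [add_div]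

theorem sq_div_le_of_add_sqrt_div_le_succ {a : ℕ → ℝ} {M : ℝ} (hM : 0 < M) (h0 : 0 ≤ a 0)
    (hstep : ∀ k, 0 ≤ a k → a k + 1 / (2 * M) + √(a k / M) ≤ a (k + 1)) (k : ℕ) :
    (k : ℝ) ^ 2 / (4 * M) ≤ a k := by
  induction k with
  | zero => simpa using h0
  | succ k ih =>
    have hsqrt : (k : ℝ) / (2 * M) ≤ √(a k / M) := calc
      (k : ℝ) / (2 * M) = √((k : ℝ) ^ 2 / (4 * M) / M) := by
        rw [← Real.sqrt_sq (by positivity : (0 : ℝ) ≤ k / (2 * M))]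
        congr 1
        field_simp
        ring
      _ ≤ √(a k / M) := by gcongr
    have hak : 0 ≤ a k := le_trans (by positivity) ih
    calc ((k + 1 : ℕ) : ℝ) ^ 2 / (4 * M) ≤ ((k : ℝ) ^ 2 + 2 * k + 2) / (4 * M) := by
          gcongr
          push_cast
          linarith
      _ = (k : ℝ) ^ 2 / (4 * M) + 1 / (2 * M) + k / (2 * M) := by
          field_simp
          ring
      _ ≤ a (k + 1) := by linarith [hstep k hak]

theorem accelerated_A_growth (A : ℕ → ℝ) (L : ℕ → ℝ) (Lbar : ℝ)
    (hA0 : A 0 = 0)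
    (hL : ∀ k, 0 < L k ∧ L k ≤ Lbar)
    (hrec : ∀ k : ℕ,
      A (k + 1) = A k + (1 + Real.sqrt (1 + 4 * A k * L (k + 1))) / (2 * L (k + 1))) :
    ∀ N : ℕ, 1 ≤ N → A N ≥ (N : ℝ) ^ 2 / (4 * Lbar) := by
  have hLbar : 0 < Lbar := (hL 0).1.trans_le (hL 0).2
  intro N _
  refine sq_div_le_of_add_sqrt_div_le_succ hLbar hA0.ge (fun k hAk ↦ ?_) N
  rw [hrec k, add_assoc]
  exact add_le_add_right (one_div_two_mul_add_sqrt_div_le hAk (hL (k + 1)).1 (hL (k + 1)).2) _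
end

section
/- Accelerated one-step estimate (Lemma 5 of the paper): Let f be differentiable, and on one iteration let y = (α u + A x_prev)/(A+α), u⁺ = u − α g where g = ∇^r f(y) is any vector, and x⁺ = (α u⁺ + A x_prev)/(A+α), with A⁺ = A + α and L α² = A⁺. Write l(x) = f(y) + ⟨g, x − y⟩. Then for all x ∈ ℝ^n: l(x⁺) + (L/2)‖x⁺ − y‖² ≤ (A/A⁺) l(x_prev) + (α/A⁺)( l(x) + (1/(2α))‖x − u‖² − (1/(2α))‖x − u⁺‖² ). -/
/-! The right-hand side splits along the convex combination `x⁺ = (A/A⁺) x_prev + (α/A⁺) u⁺`: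
the affine model `l` passes through it exactly, and `x⁺ - y = (α/A⁺)(u⁺ - u)` together with
`L α² = A⁺` turns `(L/2)‖x⁺ - y‖²` into `(α/A⁺)(1/(2α))‖u⁺ - u‖²`. What remains is the three-point
identity for the exact minimiser `u⁺ = u - α g` of `l + (1/(2α))‖· - u‖²`, so the estimate in fact
holds with equality. -/

open RealInnerProductSpace

section LinearModel

variable {E : Type*} [NormedAddCommGroup E] [InnerProductSpace ℝ E]

theorem linear_model_affine_combination (c : ℝ) (g y p q : E) {a b : ℝ} (hab : a + b = 1) :
    c + ⟪g, a • p + b • q - y⟫ = a * (c + ⟪g, p - y⟫) + b * (c + ⟪g, q - y⟫) := by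
  have hsplit : a • p + b • q - y = a • (p - y) + b • (q - y) := by
    conv_lhs => rw [← one_smul ℝ y, ← hab]
    module
  rw [hsplit, inner_add_right, real_inner_smul_right, real_inner_smul_right]
  linear_combination (-c) * hab

theorem linear_model_three_point (g u y x : E) {α : ℝ} (hα : α ≠ 0) :
    ⟪g, (u - α • g) - y⟫ + 1 / (2 * α) * ‖(u - α • g) - u‖ ^ 2 =
      ⟪g, x - y⟫ + 1 / (2 * α) * ‖x - u‖ ^ 2 - 1 / (2 * α) * ‖x - (u - α • g)‖ ^ 2 := by
  have hstep : (u - α • g) - u = -(α • g) := by abel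
  have hx : x - (u - α • g) = (x - u) + α • g := by abel
  have hy : (u - α • g) - y = (x - y) - (x - u) - α • g := by abel
  rw [hstep, hx, hy, norm_neg, norm_add_sq_real, norm_smul, Real.norm_eq_abs, mul_pow, sq_abs,
    inner_sub_right, inner_sub_right, real_inner_smul_right, real_inner_smul_right,
    real_inner_self_eq_norm_sq, real_inner_comm (x - u)]
  field_simp
  ring

end LinearModel

theorem accelerated_one_step_estimate_general (n : ℕ) (f : EuclideanSpace ℝ (Fin n) → ℝ)
    (g u xprev : EuclideanSpace ℝ (Fin n)) (α A Aplus L : ℝ)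
    (hα : 0 < α) (hA : 0 ≤ A) (hAplus : Aplus = A + α) (hL : L * α ^ 2 = Aplus)
    (y uplus xplus : EuclideanSpace ℝ (Fin n))
    (hy : y = Aplus⁻¹ • (α • u + A • xprev))
    (huplus : uplus = u - α • g)
    (hxplus : xplus = Aplus⁻¹ • (α • uplus + A • xprev)) :
    ∀ x : EuclideanSpace ℝ (Fin n),
      (f y + ⟪g, xplus - y⟫) + (L / 2) * ‖xplus - y‖ ^ 2 ≤
        (A / Aplus) * (f y + ⟪g, xprev - y⟫) +
          (α / Aplus) * ((f y + ⟪g, x - y⟫)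
            + (1 / (2 * α)) * ‖x - u‖ ^ 2 - (1 / (2 * α)) * ‖x - uplus‖ ^ 2) := by
  intro x
  have hAplus_ne : Aplus ≠ 0 := by rw [hAplus]; positivity
  have hweights : A / Aplus + α / Aplus = 1 := by field_simp; linarith
  have hxplus_comb : xplus = (A / Aplus) • xprev + (α / Aplus) • uplus := by
    rw [hxplus]; module
  have hxplus_sub : xplus - y = (α / Aplus) • (uplus - u) := by
    rw [hxplus, hy]; module
  have hmodel := linear_model_affine_combination (f y) g y xprev uplus hweights
  have hquad : L / 2 * ‖xplus - y‖ ^ 2 = α / Aplus * (1 / (2 * α) * ‖uplus - u‖ ^ 2) := by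
    rw [hxplus_sub, norm_smul, Real.norm_eq_abs, mul_pow, sq_abs]
    field_simp
    linear_combination ‖uplus - u‖ ^ 2 * hL
  have hthree := linear_model_three_point g u y x hα.ne'
  rw [← huplus] at hthree
  rw [← hxplus_comb] at hmodel
  linear_combination hmodel + hquad + α / Aplus * hthree

theorem accelerated_one_step_estimate (n : ℕ) (f : EuclideanSpace ℝ (Fin n) → ℝ)
    (hdiff : Differentiable ℝ f)
    (g u xprev : EuclideanSpace ℝ (Fin n)) (α A Aplus L : ℝ)
    (hα : 0 < α) (hA : 0 ≤ A) (hAplus : Aplus = A + α) (hL : L * α ^ 2 = Aplus)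
    (y uplus xplus : EuclideanSpace ℝ (Fin n))
    (hy : y = Aplus⁻¹ • (α • u + A • xprev))
    (huplus : uplus = u - α • g)
    (hxplus : xplus = Aplus⁻¹ • (α • uplus + A • xprev)) :
    ∀ x : EuclideanSpace ℝ (Fin n),
      (f y + ⟪g, xplus - y⟫) + (L / 2) * ‖xplus - y‖ ^ 2 ≤
        (A / Aplus) * (f y + ⟪g, xprev - y⟫) +
          (α / Aplus) * ((f y + ⟪g, x - y⟫)
            + (1 / (2 * α)) * ‖x - u‖ ^ 2 - (1 / (2 * α)) * ‖x - uplus‖ ^ 2) :=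
  accelerated_one_step_estimate_general n f g u xprev α A Aplus L hα hA hAplus hL y uplus xplus hy
    huplus hxplus
end
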